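/- arXiv:1801.01696 — 2 statements merged into one kernel-verified Lean document; each statement's English description precedes it below -/
import Mathlib

section
/- Lower bound on the posterior second moment at zero signal for the Laplace slab: if γ is the standard Laplace density, there exists C_0 > 0 such that for every real x and every α ∈ [0,1], r_2(α,0,x) ≥ C_0·α. -/
/-!
Statement 6: lower bound on the posterior second moment at zero signal
for the Laplace slab.
-/

open MeasureTheory Real Set

noncomputable section

/-- Standard normal density. -/
def phi (x : ℝ) : ℝ := Real.exp (-x ^ 2 / 2) / Real.sqrt (2 * Real.pi)

/-- Standard Laplace density. -/
def lapDen (x : ℝ) : ℝ := Real.exp (-|x|) / 2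

/-- Standard Cauchy density. -/
def cauchyDen (x : ℝ) : ℝ := (Real.pi * (1 + x ^ 2))⁻¹

/-- Convolution `g = φ * γ`. -/
def conv (γ : ℝ → ℝ) (x : ℝ) : ℝ := ∫ u, phi (x - u) * γ u

/-- Posterior weight `a(x) = α g(x) / ((1-α) φ(x) + α g(x))`. -/
def aWt (γ : ℝ → ℝ) (α x : ℝ) : ℝ :=
  α * conv γ x / ((1 - α) * phi x + α * conv γ x)

/-- Density of the single-coordinate posterior with respect to `volume + δ₀`:
the point mass `1 - a(x)` at `0`, and the continuous part `a(x) γ_x`. -/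
def coordDen (γ : ℝ → ℝ) (α x u : ℝ) : ℝ :=
  if u = 0 then 1 - aWt γ α x else aWt γ α x * (phi (x - u) * γ u / conv γ x)

/-- Single-coordinate posterior `π_α(⋅|x) = (1 - a(x)) δ₀ + a(x) γ_x`. -/
def coordPost (γ : ℝ → ℝ) (α x : ℝ) : Measure ℝ :=
  (volume + Measure.dirac (0 : ℝ)).withDensity fun u => ENNReal.ofReal (coordDen γ α x u)

/-- Posterior second moment `r₂(α, μ, x) = ∫ (u - μ)² dπ_α(u|x)`. -/
def r2 (γ : ℝ → ℝ) (α μ x : ℝ) : ℝ := ∫ u, (u - μ) ^ 2 ∂(coordPost γ α x)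

/-!
Since `∫ u² dγ_x = M(x) / g(x)` with `M(x) = ∫ u² φ(x - u) γ(u) du`, the second moment is
`r₂(α, 0, x) = α M(x) / ((1 - α) φ(x) + α g(x))`, so it suffices to bound `φ(x) + g(x)` by a
multiple of `M(x)`. By symmetry let `x ≥ 0`. On `u ∈ [1, 2]` we have `u² ≥ 1`, `γ(u) ≥ e⁻²/2`
and `φ(x - u) ≥ e^{-3/2} φ(x - 1)`, so `φ(x - 1) ≤ 2 e^{7/2} M(x)`. For `u ≤ 1` the Gaussian
factor `φ(x - u)` is at most `e^{1/2} φ(x - 1)`; this bounds `φ(x)` and the part of `g(x)` from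
`|u| ≤ 1`, while the part from `|u| > 1` is at most `M(x)`.
-/

lemma phi_pos (x : ℝ) : 0 < phi x := by unfold phi; positivity

@[fun_prop]
lemma continuous_phi : Continuous phi := by unfold phi; fun_prop

lemma phi_neg (x : ℝ) : phi (-x) = phi x := by simp [phi]

lemma phi_le_exp_mul_phi {y z : ℝ} (c : ℝ) (h : z ^ 2 ≤ y ^ 2 + 2 * c) :
    phi y ≤ Real.exp c * phi z := by
  unfold phi
  rw [mul_div_assoc', div_le_div_iff_of_pos_right (by positivity), ← Real.exp_add]
  exact Real.exp_le_exp.mpr (by linarith)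

lemma integrable_phi : Integrable phi := by
  have := (integrable_exp_neg_mul_sq (b := 1 / 2) (by norm_num)).div_const (Real.sqrt (2 * π))
  refine this.congr (ae_of_all _ fun v => ?_)
  simp only [phi]; ring_nf

lemma integrable_sq_mul_phi : Integrable fun v => v ^ 2 * phi v := by
  have := (integrable_rpow_mul_exp_neg_mul_sq (b := 1 / 2) (s := 2) (by norm_num)
    (by norm_num)).div_const (Real.sqrt (2 * π))
  refine this.congr (ae_of_all _ fun v => ?_)
  simp only [phi, Real.rpow_two]; ring_nf

lemma integrable_sq_mul_phi_sub (x : ℝ) : Integrable fun u => u ^ 2 * phi (x - u) := by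
  refine Integrable.mono' ((((integrable_sq_mul_phi.comp_sub_left x).const_mul 2).add
    ((integrable_phi.comp_sub_left x).const_mul (2 * x ^ 2))))
    (by fun_prop) (ae_of_all _ fun u => ?_)
  have hu : u ^ 2 ≤ 2 * (x - u) ^ 2 + 2 * x ^ 2 := by nlinarith [sq_nonneg (x + (x - u))]
  rw [Real.norm_of_nonneg (mul_nonneg (sq_nonneg u) (phi_pos _).le), Pi.add_apply]
  nlinarith [mul_le_mul_of_nonneg_right hu (phi_pos (x - u)).le]

def convSecondMoment (γ : ℝ → ℝ) (x : ℝ) : ℝ := ∫ u, u ^ 2 * (phi (x - u) * γ u)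

theorem r2_zero_eq {γ : ℝ → ℝ} {α x : ℝ} (hγ : Measurable γ) (hγ_nonneg : 0 ≤ γ)
    (ha : 0 ≤ aWt γ α x) (hg : 0 ≤ conv γ x)
    (hint : Integrable fun u => u ^ 2 * (phi (x - u) * γ u)) :
    r2 γ α 0 x = aWt γ α x * (convSecondMoment γ x / conv γ x) := by
  have hden : Measurable fun u => ENNReal.ofReal (coordDen γ α x u) := by
    refine ENNReal.measurable_ofReal.comp (Measurable.ite (measurableSet_singleton 0)
      measurable_const ?_)
    exact ((continuous_phi.measurable.comp (measurable_const.sub measurable_id)).mul hγ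
      |>.div_const _).const_mul _
  have hvol : (fun u => (ENNReal.ofReal (coordDen γ α x u)).toReal • (u - 0) ^ 2)
      =ᵐ[volume] fun u => aWt γ α x / conv γ x * (u ^ 2 * (phi (x - u) * γ u)) := by
    filter_upwards [compl_mem_ae_iff.mpr (measure_singleton (0 : ℝ))] with u hu
    rw [coordDen, if_neg (Set.notMem_singleton_iff.mp hu), ENNReal.toReal_ofReal
      (mul_nonneg ha (div_nonneg (mul_nonneg (phi_pos _).le (hγ_nonneg u)) hg)), smul_eq_mul]
    ring
  unfold r2 coordPost
  rw [integral_withDensity_eq_integral_toReal_smul hden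
      (ae_of_all _ fun _ => ENNReal.ofReal_lt_top),
    integral_add_measure ((hint.const_mul _).congr hvol.symm) (integrable_dirac enorm_lt_top),
    integral_dirac, integral_congr_ae hvol, integral_const_mul, convSecondMoment]
  simp only [sub_zero, ne_eq, OfNat.ofNat_ne_zero, not_false_eq_true, zero_pow, smul_zero, add_zero]
  ring

section BoundedSlab

variable {γ : ℝ → ℝ} {B : ℝ}

lemma integrable_phi_sub_mul (hγ : AEStronglyMeasurable γ) (hB : ∀ u, ‖γ u‖ ≤ B) (x : ℝ) :
    Integrable fun u => phi (x - u) * γ u :=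
  (integrable_phi.comp_sub_left x).mul_bdd hγ (ae_of_all _ hB)

lemma integrable_sq_mul_phi_sub_mul (hγ : AEStronglyMeasurable γ) (hB : ∀ u, ‖γ u‖ ≤ B)
    (x : ℝ) : Integrable fun u => u ^ 2 * (phi (x - u) * γ u) := by
  simpa only [mul_assoc] using (integrable_sq_mul_phi_sub x).mul_bdd hγ (ae_of_all _ hB)

lemma conv_pos (hγ : AEStronglyMeasurable γ) (hB : ∀ u, ‖γ u‖ ≤ B) (hγ_pos : ∀ u, 0 < γ u)
    (x : ℝ) : 0 < conv γ x := by
  have hpos : ∀ u, 0 < phi (x - u) * γ u := fun u => mul_pos (phi_pos _) (hγ_pos u)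
  rw [conv, integral_pos_iff_support_of_nonneg (fun u => (hpos u).le)
    (integrable_phi_sub_mul hγ hB x), Function.support_eq_univ fun u => (hpos u).ne']
  simp

end BoundedSlab

section EvenSlab

variable {γ : ℝ → ℝ}

lemma conv_neg (hγ : ∀ u, γ (-u) = γ u) (x : ℝ) : conv γ (-x) = conv γ x := by
  rw [conv, conv, ← integral_neg_eq_self]
  simp only [neg_sub_neg, ← phi_neg (_ - x), neg_sub, hγ]

lemma convSecondMoment_neg (hγ : ∀ u, γ (-u) = γ u) (x : ℝ) :
    convSecondMoment γ (-x) = convSecondMoment γ x := by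
  rw [convSecondMoment, convSecondMoment, ← integral_neg_eq_self]
  simp only [neg_sub_neg, ← phi_neg (_ - x), neg_sub, hγ, neg_sq]

end EvenSlab

lemma lapDen_pos (u : ℝ) : 0 < lapDen u := by unfold lapDen; positivity

lemma lapDen_le_half (u : ℝ) : lapDen u ≤ 1 / 2 := by
  unfold lapDen
  linarith [Real.exp_le_one_iff.mpr (neg_nonpos.mpr (abs_nonneg u))]

lemma lapDen_neg (u : ℝ) : lapDen (-u) = lapDen u := by rw [lapDen, lapDen, abs_neg]

@[fun_prop]
lemma continuous_lapDen : Continuous lapDen := by unfold lapDen; fun_prop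

lemma norm_lapDen_le (u : ℝ) : ‖lapDen u‖ ≤ 1 / 2 := by
  rw [Real.norm_of_nonneg (lapDen_pos u).le]; exact lapDen_le_half u

lemma integrable_sq_mul_phi_sub_mul_lapDen (x : ℝ) :
    Integrable fun u => u ^ 2 * (phi (x - u) * lapDen u) :=
  integrable_sq_mul_phi_sub_mul continuous_lapDen.aestronglyMeasurable norm_lapDen_le x

lemma one_le_two_mul_exp_mul_lapDen {u r : ℝ} (hu : |u| ≤ r) : 1 ≤ 2 * Real.exp r * lapDen u := by
  rw [lapDen, show 2 * Real.exp r * (Real.exp (-|u|) / 2) = Real.exp (r + -|u|) by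
    rw [Real.exp_add]; ring]
  exact Real.one_le_exp (by linarith)

lemma phi_sub_le {x u : ℝ} (hx : 0 ≤ x) (hu : u ≤ 1) :
    phi (x - u) ≤ Real.exp (1 / 2) * phi (x - 1) :=
  phi_le_exp_mul_phi _ (by nlinarith [mul_nonneg hx (sub_nonneg.mpr hu)])

lemma conv_lapDen_le {x : ℝ} (hx : 0 ≤ x) :
    conv lapDen x ≤ Real.exp (1 / 2) * phi (x - 1) + convSecondMoment lapDen x := by
  set c := Real.exp (1 / 2) * phi (x - 1) / 2 with hc_def
  have hpt : ∀ u, phi (x - u) * lapDen u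
      ≤ (Icc (-1) 1).indicator (fun _ => c) u + u ^ 2 * (phi (x - u) * lapDen u) := by
    intro u
    have hterm := mul_pos (phi_pos (x - u)) (lapDen_pos u)
    by_cases hu : u ∈ Icc (-1 : ℝ) 1
    · rw [indicator_of_mem hu, hc_def]
      nlinarith [mul_le_mul (phi_sub_le hx hu.2) (lapDen_le_half u) (lapDen_pos u).le
        (mul_pos (Real.exp_pos _) (phi_pos _)).le, sq_nonneg u]
    · have hu2 : 1 ≤ u ^ 2 := by
        simp only [mem_Icc, not_and_or, not_le] at hu
        rcases hu with h | h <;> nlinarith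
      rw [indicator_of_notMem hu]
      nlinarith
  have hind : Integrable ((Icc (-1 : ℝ) 1).indicator fun _ => c) :=
    (integrableOn_const (by simp)).integrable_indicator measurableSet_Icc
  calc conv lapDen x
      ≤ ∫ u, ((Icc (-1) 1).indicator (fun _ => c) u + u ^ 2 * (phi (x - u) * lapDen u)) :=
        integral_mono (integrable_phi_sub_mul continuous_lapDen.aestronglyMeasurable
          norm_lapDen_le x) (hind.add (integrable_sq_mul_phi_sub_mul_lapDen x)) hpt
    _ = Real.exp (1 / 2) * phi (x - 1) + convSecondMoment lapDen x := by
        rw [integral_add hind (integrable_sq_mul_phi_sub_mul_lapDen x),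
          integral_indicator_const _ measurableSet_Icc, volume_real_Icc_of_le (by norm_num),
          convSecondMoment, smul_eq_mul]
        ring

lemma phi_sub_one_le {x : ℝ} (hx : 0 ≤ x) :
    phi (x - 1) ≤ 2 * Real.exp (7 / 2) * convSecondMoment lapDen x := by
  have hpt : ∀ u, (Icc 1 2).indicator (fun _ => phi (x - 1)) u
      ≤ 2 * Real.exp (7 / 2) * (u ^ 2 * (phi (x - u) * lapDen u)) := by
    intro u
    have hterm := mul_pos (phi_pos (x - u)) (lapDen_pos u)
    by_cases hu : u ∈ Icc (1 : ℝ) 2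
    · have hphi : phi (x - 1) ≤ Real.exp (3 / 2) * phi (x - u) :=
        phi_le_exp_mul_phi _ (by nlinarith [hu.1, hu.2, mul_nonneg hx (sub_nonneg.mpr hu.1)])
      have hlap := one_le_two_mul_exp_mul_lapDen (abs_le.mpr ⟨by linarith [hu.1], hu.2⟩)
      have hexp : Real.exp (7 / 2) = Real.exp (3 / 2) * Real.exp 2 := by
        rw [← Real.exp_add]; norm_num
      have hu2 : 1 ≤ u ^ 2 := one_le_pow₀ hu.1
      rw [indicator_of_mem hu, hexp]
      calc phi (x - 1) ≤ Real.exp (3 / 2) * phi (x - u) * 1 := by rw [mul_one]; exact hphi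
        _ ≤ Real.exp (3 / 2) * phi (x - u) * (2 * Real.exp 2 * lapDen u * u ^ 2) := by
          exact mul_le_mul_of_nonneg_left (by nlinarith)
            (mul_pos (Real.exp_pos _) (phi_pos _)).le
        _ = _ := by ring
    · rw [indicator_of_notMem hu]
      positivity
  have := integral_mono ((integrableOn_const (by simp)).integrable_indicator measurableSet_Icc)
    ((integrable_sq_mul_phi_sub_mul_lapDen x).const_mul _) hpt
  rwa [integral_indicator_const _ measurableSet_Icc, volume_real_Icc_of_le (by norm_num),
    integral_const_mul, smul_eq_mul, show (2 : ℝ) - 1 = 1 by norm_num, one_mul] at this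

lemma phi_add_conv_lapDen_le (x : ℝ) :
    phi x + conv lapDen x ≤ (4 * Real.exp 4 + 1) * convSecondMoment lapDen x := by
  wlog hx : 0 ≤ x generalizing x
  · simpa only [phi_neg, conv_neg lapDen_neg, convSecondMoment_neg lapDen_neg]
      using this (-x) (by linarith)
  have h : Real.exp (1 / 2) * phi (x - 1) ≤ 2 * Real.exp 4 * convSecondMoment lapDen x :=
    calc Real.exp (1 / 2) * phi (x - 1)
        ≤ Real.exp (1 / 2) * (2 * Real.exp (7 / 2) * convSecondMoment lapDen x) := by
          gcongr; exact phi_sub_one_le hx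
      _ = 2 * Real.exp 4 * convSecondMoment lapDen x := by
          rw [show (4 : ℝ) = 1 / 2 + 7 / 2 by norm_num, Real.exp_add]; ring
  linarith [sub_zero x ▸ phi_sub_le hx zero_le_one, conv_lapDen_le hx]

lemma conv_lapDen_pos (x : ℝ) : 0 < conv lapDen x :=
  conv_pos continuous_lapDen.aestronglyMeasurable norm_lapDen_le lapDen_pos x

lemma r2_lapDen_zero_eq {α : ℝ} (hα : α ∈ Icc (0 : ℝ) 1) (x : ℝ) :
    r2 lapDen α 0 x = α * convSecondMoment lapDen x / ((1 - α) * phi x + α * conv lapDen x) := by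
  have hg := conv_lapDen_pos x
  have hD : 0 ≤ (1 - α) * phi x + α * conv lapDen x :=
    add_nonneg (mul_nonneg (sub_nonneg.mpr hα.2) (phi_pos x).le) (mul_nonneg hα.1 hg.le)
  rw [r2_zero_eq continuous_lapDen.measurable (fun u => (lapDen_pos u).le)
    (div_nonneg (mul_nonneg hα.1 hg.le) hD) hg.le (integrable_sq_mul_phi_sub_mul_lapDen x), aWt]
  field_simp

/-- Lemma 2: for `γ` the standard Laplace density, there
exists `C₀ > 0` such that `r₂(α, 0, x) ≥ C₀ α` for every real `x` and every
`α ∈ [0,1]`. -/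
theorem laplace_r2_lower_bound :
    ∃ C0 > (0 : ℝ), ∀ x : ℝ, ∀ α ∈ Set.Icc (0 : ℝ) 1, C0 * α ≤ r2 lapDen α 0 x := by
  set C := 4 * Real.exp 4 + 1
  have hC : 0 < C := by positivity
  refine ⟨C⁻¹, inv_pos.mpr hC, fun x α hα => ?_⟩
  have hφ := phi_pos x
  have hg := conv_lapDen_pos x
  have hD_pos : 0 < (1 - α) * phi x + α * conv lapDen x := by
    rcases hα.2.lt_or_eq with hα1 | rfl
    · nlinarith [mul_nonneg hα.1 hg.le]
    · simpa using hg
  have hD_le : (1 - α) * phi x + α * conv lapDen x ≤ C * convSecondMoment lapDen x := by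
    nlinarith [mul_nonneg hα.1 hφ.le, mul_nonneg (sub_nonneg.2 hα.2) hg.le,
      phi_add_conv_lapDen_le x]
  rw [r2_lapDen_zero_eq hα, le_div_iff₀ hD_pos]
  calc C⁻¹ * α * ((1 - α) * phi x + α * conv lapDen x)
      ≤ C⁻¹ * α * (C * convSecondMoment lapDen x) := by
        gcongr; exact mul_nonneg (inv_pos.mpr hC).le hα.1
    _ = α * convSecondMoment lapDen x := by field_simp [hC.ne']

end
end

section
/- Monotonicity of β for the SSL prior: the function β = g_1/g_0 − 1 is strictly increasing on the interval [2λ_1, √(2 log n)], for n large enough. -/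
/-!
`β' > 0` amounts to `g₁'/g₁ > g₀'/g₀`. The Cauchy density satisfies `|γ₁'| ≤ λ₁ γ₁`, so
`g₁'/g₁ ≥ -λ₁`. Differentiating the Gaussian kernel gives `g₀' = -x g₀ + ∫ u φ(x-u) γ₀(u) du`.
Since `φ(x-u) = φ(x) e^{xu - u²/2}`, for `x ≤ λ₀/2` the remainder is at most `4 φ(x)/λ₀`, while
the mass of `γ₀` on `[0, 1/λ₀]` gives `g₀ ≥ φ(x) e⁻²/2`. Hence `g₀'/g₀ ≤ -x + 8e²/λ₀ < -λ₁` as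
soon as `x ≥ 2λ₁` and `λ₀ > 160 e²`; the upper end `√(2 log n)` of the interval is below `λ₀/2`.
-/

open MeasureTheory Real Set

noncomputable section

/-- Spike inverse-scale `λ₀ = 5√(2π) n`. -/
def lam0 (n : ℕ) : ℝ := 5 * Real.sqrt (2 * Real.pi) * n

/-- Slab scale parameter `λ₁ = 0.05`. -/
def lam1 : ℝ := 0.05

/-- Spike density: Laplace with parameter `λ₀`. -/
def gamma0 (n : ℕ) (x : ℝ) : ℝ := lam0 n / 2 * Real.exp (-(lam0 n) * |x|)

/-- Slab density: Cauchy with scale `1/λ₁`. -/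
def gamma1 (x : ℝ) : ℝ := lam1 / Real.pi * (1 + lam1 ^ 2 * x ^ 2)⁻¹

/-- `g₀ = φ * γ₀`. -/
def g0 (n : ℕ) (x : ℝ) : ℝ := ∫ u, phi (x - u) * gamma0 n u

/-- `g₁ = φ * γ₁`. -/
def g1 (x : ℝ) : ℝ := ∫ u, phi (x - u) * gamma1 u

/-- `β(x) = g₁(x)/g₀(x) - 1` for the SSL prior. -/
def betaSSL (n : ℕ) (x : ℝ) : ℝ := g1 x / g0 n x - 1

lemma phi_eq_gaussianPDFReal : phi = ProbabilityTheory.gaussianPDFReal 0 1 := by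
  ext x
  simp only [phi, ProbabilityTheory.gaussianPDFReal, NNReal.coe_one, mul_one, sub_zero]
  ring_nf

lemma one_le_sqrt_two_mul_pi : 1 ≤ √(2 * π) :=
  one_le_sqrt.2 (by linarith [pi_gt_three])

lemma abs_phi_le_one (x : ℝ) : |phi x| ≤ 1 := by
  rw [abs_of_pos (phi_pos x), phi, div_le_one (by positivity)]
  exact (exp_le_one_iff.2 (by nlinarith [sq_nonneg x])).trans one_le_sqrt_two_mul_pi

lemma abs_mul_phi_le_one (x : ℝ) : |x * phi x| ≤ 1 := by
  have hx : |x| ≤ exp (x ^ 2 / 2) := by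
    nlinarith [add_one_le_exp (x ^ 2 / 2), sq_abs x, sq_nonneg (|x| - 1)]
  rw [abs_mul, abs_of_pos (phi_pos x), phi, mul_div_assoc', div_le_one (by positivity),
    neg_div, exp_neg, ← div_eq_mul_inv, div_le_iff₀ (exp_pos _)]
  nlinarith [one_le_sqrt_two_mul_pi, exp_pos (x ^ 2 / 2)]

lemma hasDerivAt_phi (x : ℝ) : HasDerivAt phi (-x * phi x) x := by
  have h : HasDerivAt (fun t : ℝ => -t ^ 2 / 2) (-x) x :=
    ((hasDerivAt_pow 2 x).neg.div_const 2).congr_deriv (by ring)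
  exact (h.exp.div_const √(2 * π)).congr_deriv (by rw [phi]; ring)

lemma phi_sub (x u : ℝ) : phi (x - u) = phi x * exp (x * u - u ^ 2 / 2) := by
  rw [phi, phi, div_mul_eq_mul_div, ← exp_add]
  ring_nf

section KernelConvolution

variable {k k' f : ℝ → ℝ} {B C : ℝ}

lemma integrable_comp_sub_mul (hk : Measurable k) (hkB : ∀ t, |k t| ≤ B) (hf : Integrable f)
    (x : ℝ) : Integrable (fun u => k (x - u) * f u) :=
  hf.bdd_mul (hk.comp (measurable_const.sub measurable_id)).aestronglyMeasurable
    (Filter.Eventually.of_forall fun u => hkB (x - u))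

lemma continuous_of_hasDerivAt (hk : ∀ t, HasDerivAt k (k' t) t) : Continuous k :=
  continuous_iff_continuousAt.2 fun t => (hk t).continuousAt

lemma measurable_of_hasDerivAt (hk : ∀ t, HasDerivAt k (k' t) t) : Measurable k' := by
  rw [show k' = deriv k from funext fun t => (hk t).deriv.symm]
  exact measurable_deriv k

lemma hasDerivAt_integral_comp_sub_mul (hk : ∀ t, HasDerivAt k (k' t) t)
    (hkB : ∀ t, |k t| ≤ B) (hk'C : ∀ t, |k' t| ≤ C) (hf : Integrable f) (x : ℝ) :
    HasDerivAt (fun y => ∫ u, k (y - u) * f u) (∫ u, k' (x - u) * f u) x := by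
  have hk_meas := (continuous_of_hasDerivAt hk).measurable
  refine (hasDerivAt_integral_of_dominated_loc_of_deriv_le (F' := fun y u => k' (y - u) * f u)
    (bound := fun u => C * |f u|)
    Filter.univ_mem (Filter.Eventually.of_forall fun y =>
      (integrable_comp_sub_mul hk_meas hkB hf y).aestronglyMeasurable)
    (integrable_comp_sub_mul hk_meas hkB hf x)
    (integrable_comp_sub_mul (measurable_of_hasDerivAt hk) hk'C hf x).aestronglyMeasurable
    (Filter.Eventually.of_forall fun u y _ => ?_) (hf.abs.const_mul C)
    (Filter.Eventually.of_forall fun u y _ => ?_)).2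
  · rw [Real.norm_eq_abs, abs_mul]
    exact mul_le_mul_of_nonneg_right (hk'C _) (abs_nonneg _)
  · exact ((hk (y - u)).comp y ((hasDerivAt_id y).sub_const u)).mul_const (f u)
      |>.congr_deriv (by simp)

lemma exists_hasDerivAt_integral_comp_sub_mul_ge {ρ : ℝ → ℝ} {a : ℝ}
    (hk : ∀ t, HasDerivAt k (ρ t * k t) t) (hk0 : ∀ t, 0 ≤ k t) (hkB : ∀ t, |k t| ≤ B)
    (hρ : ∀ t, |ρ t| ≤ a) (hf0 : ∀ u, 0 ≤ f u) (hf : Integrable f) (x : ℝ) :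
    ∃ D, HasDerivAt (fun y => ∫ u, k (y - u) * f u) D x ∧ -a * ∫ u, k (x - u) * f u ≤ D := by
  have hk'C : ∀ t, |ρ t * k t| ≤ a * B := fun t => by
    rw [abs_mul]
    exact mul_le_mul (hρ t) (hkB t) (abs_nonneg _) ((abs_nonneg _).trans (hρ t))
  refine ⟨_, hasDerivAt_integral_comp_sub_mul hk hkB hk'C hf x, ?_⟩
  rw [← integral_const_mul]
  refine integral_mono ((integrable_comp_sub_mul (continuous_of_hasDerivAt hk).measurable hkB hf
    x).const_mul _) (integrable_comp_sub_mul (measurable_of_hasDerivAt hk) hk'C hf x) fun u => ?_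
  rw [mul_assoc]
  exact mul_le_mul_of_nonneg_right (neg_le_of_abs_le (hρ (x - u)))
    (mul_nonneg (hk0 (x - u)) (hf0 u))

end KernelConvolution

lemma abs_two_mul_sq_mul_div_one_add_sq_le {a : ℝ} (ha : 0 ≤ a) (t : ℝ) :
    |2 * a ^ 2 * t / (1 + a ^ 2 * t ^ 2)| ≤ a := by
  rw [abs_div, abs_of_pos (by positivity : 0 < 1 + a ^ 2 * t ^ 2), div_le_iff₀ (by positivity),
    abs_mul, abs_of_nonneg (by positivity : 0 ≤ 2 * a ^ 2), ← sq_abs t]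
  nlinarith [mul_nonneg ha (sq_nonneg (1 - a * |t|))]

lemma gamma1_pos (t : ℝ) : 0 < gamma1 t := by
  unfold gamma1 lam1
  positivity

lemma abs_gamma1_le_one (t : ℝ) : |gamma1 t| ≤ 1 := by
  rw [abs_of_pos (gamma1_pos t), gamma1, lam1]
  calc 0.05 / π * (1 + 0.05 ^ 2 * t ^ 2)⁻¹ ≤ 0.05 / π * 1 := by
        gcongr
        exact inv_le_one_of_one_le₀ (le_add_of_nonneg_right (by positivity))
    _ ≤ 1 := by rw [mul_one, div_le_one pi_pos]; linarith [pi_gt_three]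

lemma hasDerivAt_gamma1 (t : ℝ) :
    HasDerivAt gamma1 (-(2 * lam1 ^ 2 * t / (1 + lam1 ^ 2 * t ^ 2)) * gamma1 t) t := by
  have h : HasDerivAt (fun s : ℝ => 1 + lam1 ^ 2 * s ^ 2) (2 * lam1 ^ 2 * t) t :=
    (((hasDerivAt_pow 2 t).const_mul (lam1 ^ 2)).const_add 1).congr_deriv (by ring)
  have hne : 1 + lam1 ^ 2 * t ^ 2 ≠ 0 := by positivity
  exact ((h.inv hne).const_mul (lam1 / π)).congr_deriv (by rw [gamma1]; field_simp)

lemma g1_eq_integral_gamma1_sub_mul : g1 = fun x => ∫ u, gamma1 (x - u) * phi u := by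
  ext x
  rw [g1, ← integral_sub_left_eq_self _ volume x]
  congr 1 with u
  rw [sub_sub_cancel, mul_comm]

lemma g1_pos (x : ℝ) : 0 < g1 x := by
  have hcont := continuous_of_hasDerivAt hasDerivAt_gamma1
  rw [g1_eq_integral_gamma1_sub_mul]
  exact integral_pos_of_integrable_nonneg_nonzero (x := 0)
    ((hcont.comp (continuous_sub_left x)).mul continuous_phi)
    (integrable_comp_sub_mul hcont.measurable abs_gamma1_le_one integrable_phi x)
    (fun u => mul_nonneg (gamma1_pos _).le (phi_pos u).le)
    (mul_pos (gamma1_pos _) (phi_pos 0)).ne'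

lemma exists_hasDerivAt_g1_ge (x : ℝ) : ∃ D, HasDerivAt g1 D x ∧ -lam1 * g1 x ≤ D := by
  rw [g1_eq_integral_gamma1_sub_mul]
  exact exists_hasDerivAt_integral_comp_sub_mul_ge hasDerivAt_gamma1 (fun t => (gamma1_pos t).le)
    abs_gamma1_le_one
    (fun t => by rw [abs_neg]; exact abs_two_mul_sq_mul_div_one_add_sq_le (by norm_num [lam1]) t)
    (fun u => (phi_pos u).le) integrable_phi x

lemma integrable_comp_abs_of_integrableOn_Ioi {f : ℝ → ℝ} (hf : IntegrableOn f (Ioi 0)) :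
    Integrable fun x => f |x| := by
  have hIoi : IntegrableOn (fun x => f |x|) (Ioi 0) :=
    hf.congr_fun (fun x hx => by rw [abs_of_pos hx]) measurableSet_Ioi
  have hIic : IntegrableOn (fun x => f |x|) (Iic 0) := by
    have hneg : MeasurableEmbedding fun x : ℝ => -x := (Homeomorph.neg ℝ).measurableEmbedding
    rw [← Measure.map_neg_eq_self (volume : Measure ℝ), hneg.integrableOn_map_iff]
    simp_rw [Function.comp_def, abs_neg, neg_preimage, neg_Iic, neg_zero]
    exact (integrableOn_Ici_iff_integrableOn_Ioi (by simp)).2 hIoi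
  simpa only [Iic_union_Ioi, integrableOn_univ] using hIic.union hIoi

section Laplace

variable {a c x : ℝ}

lemma integrable_abs_mul_exp_neg_mul_abs (ha : 0 < a) :
    Integrable fun u => |u| * exp (-a * |u|) := by
  refine integrable_comp_abs_of_integrableOn_Ioi (f := fun t => t * exp (-a * t)) ?_
  simpa only [rpow_one] using
    integrableOn_rpow_mul_exp_neg_mul_rpow (s := 1) (p := 1) (by norm_num) one_pos ha

lemma integral_abs_mul_exp_neg_mul_abs (ha : 0 < a) :
    ∫ u, |u| * exp (-a * |u|) = 2 / a ^ 2 := by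
  have h : ∫ t in Ioi 0, t * exp (-a * t) = 1 / a ^ 2 := by
    simpa [Gamma_two, neg_mul, show (2 : ℝ) - 1 = 1 by norm_num] using
      integral_rpow_mul_exp_neg_mul_Ioi (a := 2) two_pos ha
  rw [integral_comp_abs (f := fun t => t * exp (-a * t)), h]
  ring

def laplaceDensity (c u : ℝ) : ℝ := c / 2 * exp (-c * |u|)

def phiConvLaplace (c x : ℝ) : ℝ := ∫ u, phi (x - u) * laplaceDensity c u

lemma integrable_laplaceDensity (hc : 0 < c) : Integrable (laplaceDensity c) :=
  (integrable_comp_abs_of_integrableOn_Ioi (exp_neg_integrableOn_Ioi 0 hc)).const_mul (c / 2)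

lemma phiConvLaplace_ge (hc : 1 ≤ c) (hx : 0 ≤ x) : phi x * exp (-2) / 2 ≤ phiConvLaplace c x := by
  have hc0 : 0 < c := one_pos.trans_le hc
  have hint : Integrable fun u => phi (x - u) * laplaceDensity c u :=
    integrable_comp_sub_mul continuous_phi.measurable abs_phi_le_one
      (integrable_laplaceDensity hc0) x
  have hbound : ∀ u ∈ Icc 0 (1 / c),
      phi x * (c / 2) * exp (-2) ≤ phi (x - u) * laplaceDensity c u := by
    rintro u ⟨hu0, hu1⟩
    have hcu : c * u ≤ 1 := by rwa [le_div_iff₀' hc0] at hu1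
    have hu : u ≤ 1 := by nlinarith
    rw [phi_sub, laplaceDensity, abs_of_nonneg hu0]
    calc phi x * (c / 2) * exp (-2) = phi x * exp (-1) * (c / 2 * exp (-1)) := by
          rw [show (-2 : ℝ) = -1 + -1 by norm_num, exp_add]; ring
      _ ≤ phi x * exp (x * u - u ^ 2 / 2) * (c / 2 * exp (-c * u)) := by
          have := (phi_pos x).le
          gcongr <;> nlinarith
  calc phi x * exp (-2) / 2 = phi x * (c / 2) * exp (-2) * volume.real (Icc 0 (1 / c)) := by
        rw [Real.volume_real_Icc_of_le (by positivity), sub_zero]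
        field_simp
    _ ≤ ∫ u in Icc 0 (1 / c), phi (x - u) * laplaceDensity c u :=
        setIntegral_ge_of_const_le_real measurableSet_Icc measure_Icc_lt_top.ne hbound
          hint.integrableOn
    _ ≤ phiConvLaplace c x :=
        setIntegral_le_integral hint (Filter.Eventually.of_forall fun u =>
          mul_nonneg (phi_pos _).le (by unfold laplaceDensity; positivity))

lemma phi_sub_mul_laplaceDensity_le (hx : |x| ≤ c / 2) (u : ℝ) :
    phi (x - u) * laplaceDensity c u ≤ phi x * (c / 2) * exp (-(c / 2) * |u|) := by
  have hxu : x * u ≤ c / 2 * |u| :=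
    (le_abs_self _).trans (by rw [abs_mul]; exact mul_le_mul_of_nonneg_right hx (abs_nonneg u))
  have hc : 0 ≤ c / 2 := (abs_nonneg x).trans hx
  rw [phi_sub, laplaceDensity, mul_mul_mul_comm, ← exp_add]
  gcongr
  · exact mul_nonneg (phi_pos x).le hc
  · nlinarith [sq_nonneg u]

lemma abs_mul_phi_sub_mul_laplaceDensity_le (hx : |x| ≤ c / 2) (u : ℝ) :
    |u| * (phi (x - u) * laplaceDensity c u) ≤ phi x * (c / 2) * (|u| * exp (-(c / 2) * |u|)) := by
  have := mul_le_mul_of_nonneg_left (phi_sub_mul_laplaceDensity_le hx u) (abs_nonneg u)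
  linarith

lemma integrable_abs_mul_phi_sub_mul_laplaceDensity (hc : 0 < c) (hx : |x| ≤ c / 2) :
    Integrable fun u => |u| * (phi (x - u) * laplaceDensity c u) := by
  refine ((integrable_abs_mul_exp_neg_mul_abs (half_pos hc)).const_mul (phi x * (c / 2))).mono'
    (Continuous.aestronglyMeasurable (by unfold laplaceDensity; fun_prop))
    (Filter.Eventually.of_forall fun u => ?_)
  have h0 : 0 ≤ |u| * (phi (x - u) * laplaceDensity c u) :=
    mul_nonneg (abs_nonneg u) (mul_nonneg (phi_pos _).le (by unfold laplaceDensity; positivity))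
  rw [Real.norm_eq_abs, abs_of_nonneg h0]
  exact abs_mul_phi_sub_mul_laplaceDensity_le hx u

lemma integral_abs_mul_phi_sub_mul_laplaceDensity_le (hc : 0 < c) (hx : |x| ≤ c / 2) :
    ∫ u, |u| * (phi (x - u) * laplaceDensity c u) ≤ 4 * phi x / c := by
  calc ∫ u, |u| * (phi (x - u) * laplaceDensity c u)
      ≤ ∫ u, phi x * (c / 2) * (|u| * exp (-(c / 2) * |u|)) :=
        integral_mono (integrable_abs_mul_phi_sub_mul_laplaceDensity hc hx)
          ((integrable_abs_mul_exp_neg_mul_abs (half_pos hc)).const_mul _)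
          (abs_mul_phi_sub_mul_laplaceDensity_le hx)
    _ = 4 * phi x / c := by
        rw [integral_const_mul, integral_abs_mul_exp_neg_mul_abs (half_pos hc)]
        field_simp
        ring

lemma exists_hasDerivAt_phiConvLaplace_le (hc : 1 ≤ c) (hx0 : 0 ≤ x) (hxc : x ≤ c / 2) :
    ∃ D, HasDerivAt (phiConvLaplace c) D x ∧
      D ≤ -(x - 8 * exp 2 / c) * phiConvLaplace c x := by
  have hc0 : 0 < c := one_pos.trans_le hc
  have hx : |x| ≤ c / 2 := by rwa [abs_of_nonneg hx0]
  have hL := integrable_laplaceDensity hc0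
  have hk' : ∀ t, |-t * phi t| ≤ 1 := fun t => by rw [neg_mul, abs_neg]; exact abs_mul_phi_le_one t
  have hG := integrable_comp_sub_mul continuous_phi.measurable abs_phi_le_one hL x
  have hT := integrable_abs_mul_phi_sub_mul_laplaceDensity hc0 hx
  refine ⟨_, hasDerivAt_integral_comp_sub_mul hasDerivAt_phi abs_phi_le_one hk' hL x, ?_⟩
  have hlow := phiConvLaplace_ge hc hx0
  have hup := integral_abs_mul_phi_sub_mul_laplaceDensity_le hc0 hx
  calc ∫ u, -(x - u) * phi (x - u) * laplaceDensity c u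
      ≤ ∫ u, (|u| * (phi (x - u) * laplaceDensity c u) - x * (phi (x - u) * laplaceDensity c u)) :=
        integral_mono (integrable_comp_sub_mul (measurable_of_hasDerivAt hasDerivAt_phi) hk' hL x)
          (hT.sub (hG.const_mul x)) fun u => by
            have := mul_nonneg (phi_pos (x - u)).le
              (by unfold laplaceDensity; positivity : 0 ≤ laplaceDensity c u)
            nlinarith [le_abs_self u]
    _ = (∫ u, |u| * (phi (x - u) * laplaceDensity c u)) - x * phiConvLaplace c x := by
        rw [integral_sub hT (hG.const_mul x), integral_const_mul, phiConvLaplace]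
    _ ≤ 4 * phi x / c - x * phiConvLaplace c x := by linarith
    _ = 8 * exp 2 / c * (phi x * exp (-2) / 2) - x * phiConvLaplace c x := by
        rw [exp_neg]
        field_simp
        ring
    _ ≤ 8 * exp 2 / c * phiConvLaplace c x - x * phiConvLaplace c x := by gcongr
    _ = -(x - 8 * exp 2 / c) * phiConvLaplace c x := by ring

end Laplace

lemma twelve_mul_le_lam0 (n : ℕ) : 12 * (n : ℝ) ≤ lam0 n := by
  have : 2.4 ≤ √(2 * π) := le_sqrt_of_sq_le (by nlinarith [pi_gt_three])
  rw [lam0]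
  nlinarith [(Nat.cast_nonneg n : (0 : ℝ) ≤ n)]

lemma sqrt_two_mul_log_le_half_lam0 (n : ℕ) : √(2 * log n) ≤ lam0 n / 2 := by
  have hn : (n : ℝ) ≤ (n : ℝ) ^ 2 := by exact_mod_cast Nat.le_self_pow two_ne_zero n
  have := log_le_self (Nat.cast_nonneg n : (0 : ℝ) ≤ n)
  have := twelve_mul_le_lam0 n
  rw [sqrt_le_iff]
  constructor <;> nlinarith [(Nat.cast_nonneg n : (0 : ℝ) ≤ n)]

lemma betaSSL_eq (n : ℕ) : betaSSL n = fun x => g1 x / phiConvLaplace (lam0 n) x - 1 := rfl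

lemma exists_hasDerivAt_betaSSL_pos {n : ℕ} {x : ℝ} (hn : 160 * exp 2 < lam0 n)
    (hx : 2 * lam1 ≤ x) (hxn : x ≤ lam0 n / 2) : ∃ D, HasDerivAt (betaSSL n) D x ∧ 0 < D := by
  have hc : 1 ≤ lam0 n := by nlinarith [add_one_le_exp 2]
  have hx0 : 0 ≤ x := le_trans (by norm_num [lam1]) hx
  obtain ⟨D1, hD1, hD1_ge⟩ := exists_hasDerivAt_g1_ge x
  obtain ⟨D0, hD0, hD0_le⟩ := exists_hasDerivAt_phiConvLaplace_le hc hx0 hxn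
  have hg1 := g1_pos x
  have hg0 : 0 < phiConvLaplace (lam0 n) x :=
    lt_of_lt_of_le (by have := phi_pos x; positivity) (phiConvLaplace_ge hc hx0)
  have hε : 8 * exp 2 / lam0 n < lam1 := by
    rw [div_lt_iff₀ (by positivity), lam1]
    linarith
  have gap : lam1 < x - 8 * exp 2 / lam0 n := by linarith
  rw [betaSSL_eq]
  refine ⟨_, (hD1.div hD0 hg0.ne').sub_const 1, div_pos ?_ (by positivity)⟩
  nlinarith [mul_le_mul_of_nonneg_right hD1_ge hg0.le, mul_le_mul_of_nonneg_left hD0_le hg1.le,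
    mul_pos (sub_pos.2 gap) (mul_pos hg1 hg0)]

/-- Proposition 1: monotonicity of `β` for the SSL prior.
For `n` large enough, `β = g₁/g₀ - 1` is strictly increasing on
`[2λ₁, √(2 log n)]`. -/
theorem betaSSL_strictMonoOn :
    ∃ N0 : ℕ, ∀ n : ℕ, N0 ≤ n →
      StrictMonoOn (betaSSL n) (Set.Icc (2 * lam1) (Real.sqrt (2 * Real.log n))) := by
  refine ⟨200, fun n hn => ?_⟩
  have hlam0 : 160 * exp 2 < lam0 n := by
    have : (200 : ℝ) ≤ n := by exact_mod_cast hn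
    have := exp_one_lt_d9
    rw [show (2 : ℝ) = 1 + 1 by norm_num, exp_add]
    nlinarith [twelve_mul_le_lam0 n, exp_pos 1]
  have hderiv : ∀ x ∈ Icc (2 * lam1) √(2 * log n), ∃ D, HasDerivAt (betaSSL n) D x ∧ 0 < D :=
    fun x hx => exists_hasDerivAt_betaSSL_pos hlam0 hx.1
      (hx.2.trans (sqrt_two_mul_log_le_half_lam0 n))
  refine strictMonoOn_of_deriv_pos (convex_Icc _ _) (fun x hx => ?_) fun x hx => ?_
  · obtain ⟨D, hD, -⟩ := hderiv x hx
    exact hD.continuousAt.continuousWithinAt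
  · obtain ⟨D, hD, hpos⟩ := hderiv x (interior_subset hx)
    rwa [hD.deriv]

end
end
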